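/- arXiv:1102.2707 — 3 statements merged into one kernel-verified Lean document; each statement's English description precedes it below -/
import Mathlib

section
/- Let A, B be n×n matrices over the finitary tropical semiring FT = (ℝ, max, +). If A = PBQ for some P, Q ∈ M_n(T) where T = ℝ ∪ {-∞}, then there exist P', Q' ∈ M_n(FT) (all entries real) with A = P'BQ'. Consequently A ≤_J B in M_n(FT) if and only if A ≤_J B in M_n(T). -/
/-- Tropical (max-plus) matrix multiplication: `(X ⊗ Y)_{ij} = max_k (X_{ik} + Y_{kj})`. -/
def tropMul {S : Type*} [SemilatticeSup S] [Add S] {n : ℕ} [NeZero n]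
    (X Y : Matrix (Fin n) (Fin n) S) : Matrix (Fin n) (Fin n) S :=
  fun i j => Finset.univ.sup' Finset.univ_nonempty fun k => X i k + Y k j

/-- Green's `J`-order: `A ≤_J B` iff `A ∈ M¹ B M¹`. -/
def JleGen {M : Type*} (mul : M → M → M) (A B : M) : Prop :=
  A = B ∨ (∃ P, A = mul P B) ∨ (∃ Q, A = mul B Q) ∨ ∃ P Q, A = mul (mul P B) Q

/-- Embed a real matrix into matrices over `T = ℝ ∪ {-∞} = WithBot ℝ`. -/
def toBotMat {n : ℕ} (A : Matrix (Fin n) (Fin n) ℝ) :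
    Matrix (Fin n) (Fin n) (WithBot ℝ) := fun i j => (A i j : WithBot ℝ)

/-!
Each entry `(PBQ)ᵢⱼ` is the largest of the finitely many terms `Pᵢₖ + Bₖₗ + Qₗⱼ`. Replacing the
`-∞` entries of `P` and `Q` by a real `δ` can only increase the product, while every term that
was `-∞` tends to `-∞` with `δ`, so for `δ` small enough all terms stay below `Aᵢⱼ` and the
product is still `A`. Since `M_n(T)` has an identity, `A ≤_J B` there just means `A = PBQ`.
-/

open Filter

section TropMul

variable {S : Type*} {n : ℕ} [NeZero n]

theorem tropMul_mono [SemilatticeSup S] [Add S] [AddLeftMono S] [AddRightMono S]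
    {X X' Y Y' : Matrix (Fin n) (Fin n) S} (hX : ∀ i j, X i j ≤ X' i j)
    (hY : ∀ i j, Y i j ≤ Y' i j) (i j : Fin n) : tropMul X Y i j ≤ tropMul X' Y' i j :=
  Finset.sup'_le _ _ fun k _ =>
    Finset.le_sup'_of_le _ (Finset.mem_univ k) (add_le_add (hX i k) (hY k j))

theorem le_tropMul_tropMul [SemilatticeSup S] [Add S] [AddRightMono S]
    (X Y Z : Matrix (Fin n) (Fin n) S) (i j k l : Fin n) :
    X i k + Y k l + Z l j ≤ tropMul (tropMul X Y) Z i j :=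
  calc X i k + Y k l + Z l j ≤ tropMul X Y i l + Z l j :=
        add_le_add_left (Finset.le_sup' (fun k => X i k + Y k l) (Finset.mem_univ k)) _
    _ ≤ tropMul (tropMul X Y) Z i j :=
        Finset.le_sup' (fun l => tropMul X Y i l + Z l j) (Finset.mem_univ l)

theorem exists_tropMul_tropMul_eq [LinearOrder S] [Add S]
    (X Y Z : Matrix (Fin n) (Fin n) S) (i j : Fin n) :
    ∃ k l, tropMul (tropMul X Y) Z i j = X i k + Y k l + Z l j := by
  obtain ⟨l, -, hl⟩ := Finset.exists_mem_eq_sup' Finset.univ_nonempty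
    fun l => tropMul X Y i l + Z l j
  obtain ⟨k, -, hk⟩ := Finset.exists_mem_eq_sup' Finset.univ_nonempty
    fun k => X i k + Y k l
  exact ⟨k, l, hl.trans (congrArg (· + Z l j) hk)⟩

theorem tropMul_tropMul_le_iff [LinearOrder S] [Add S] [AddRightMono S]
    {X Y Z : Matrix (Fin n) (Fin n) S} {i j : Fin n} {a : S} :
    tropMul (tropMul X Y) Z i j ≤ a ↔ ∀ k l, X i k + Y k l + Z l j ≤ a := by
  refine ⟨fun h k l => (le_tropMul_tropMul X Y Z i j k l).trans h, fun h => ?_⟩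
  obtain ⟨k, l, hkl⟩ := exists_tropMul_tropMul_eq X Y Z i j
  exact hkl ▸ h k l

end TropMul

theorem toBotMat_tropMul {n : ℕ} [NeZero n] (X Y : Matrix (Fin n) (Fin n) ℝ) :
    toBotMat (tropMul X Y) = tropMul (toBotMat X) (toBotMat Y) :=
  funext₂ fun _ _ =>
    Finset.apply_sup'_eq_sup'_comp _ WithBot.some fun a b => WithBot.coe_sup a b

def tropId {α : Type*} [Zero α] {n : ℕ} : Matrix (Fin n) (Fin n) (WithBot α) :=
  fun i j => if i = j then 0 else ⊥

section TropId

variable {α : Type*} [AddZeroClass α] [LinearOrder α] {n : ℕ} [NeZero n]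

theorem tropMul_tropId (X : Matrix (Fin n) (Fin n) (WithBot α)) : tropMul X tropId = X := by
  funext i j
  refine le_antisymm (Finset.sup'_le _ _ fun k _ => ?_)
    (Finset.le_sup'_of_le _ (Finset.mem_univ j) (by simp [tropId]))
  by_cases hk : k = j <;> simp [tropId, hk]

theorem tropId_tropMul (X : Matrix (Fin n) (Fin n) (WithBot α)) : tropMul tropId X = X := by
  funext i j
  refine le_antisymm (Finset.sup'_le _ _ fun k _ => ?_)
    (Finset.le_sup'_of_le _ (Finset.mem_univ i) (by simp [tropId]))
  by_cases hk : i = k <;> simp [tropId, hk]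

end TropId

theorem eventually_unbotD_add_add_unbotD_le {x y : WithBot ℝ} {r a : ℝ}
    (h : x + r + y ≤ a) : ∀ᶠ δ in atBot, x.unbotD δ + r + y.unbotD δ ≤ a := by
  induction x using WithBot.recBotCoe with
  | bot =>
    induction y using WithBot.recBotCoe with
    | bot =>
      filter_upwards [eventually_le_atBot 0, eventually_le_atBot (a - r)] with δ h₀ h₁
      simp only [WithBot.unbotD_bot]
      linarith
    | coe s =>
      filter_upwards [eventually_le_atBot (a - r - s)] with δ hδ
      simp only [WithBot.unbotD_bot, WithBot.unbotD_coe]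
      linarith
  | coe t =>
    induction y using WithBot.recBotCoe with
    | bot =>
      filter_upwards [eventually_le_atBot (a - r - t)] with δ hδ
      simp only [WithBot.unbotD_bot, WithBot.unbotD_coe]
      linarith
    | coe s =>
      exact Eventually.of_forall fun _ => by exact_mod_cast h

theorem exists_real_eq_tropMul_tropMul_of_withBot {n : ℕ} [NeZero n]
    {A B : Matrix (Fin n) (Fin n) ℝ} {P Q : Matrix (Fin n) (Fin n) (WithBot ℝ)}
    (h : toBotMat A = tropMul (tropMul P (toBotMat B)) Q) :
    ∃ P' Q' : Matrix (Fin n) (Fin n) ℝ, A = tropMul (tropMul P' B) Q' := by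
  have hterm : ∀ i j k l, P i k + B k l + Q l j ≤ A i j := fun i j k l =>
    (le_tropMul_tropMul P (toBotMat B) Q i j k l).trans_eq (congrFun (congrFun h i) j).symm
  obtain ⟨δ, hδ⟩ : ∃ δ : ℝ, ∀ i j k l, (P i k).unbotD δ + B k l + (Q l j).unbotD δ ≤ A i j := by
    refine Eventually.exists (f := atBot) ?_
    simp only [eventually_all]
    exact fun i j k l => eventually_unbotD_add_add_unbotD_le (hterm i j k l)
  refine ⟨P.map (·.unbotD δ), Q.map (·.unbotD δ), funext₂ fun i j => ?_⟩
  refine le_antisymm ?_ (tropMul_tropMul_le_iff.2 fun k l => hδ i j k l)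
  rw [← WithBot.coe_le_coe]
  calc (A i j : WithBot ℝ) = tropMul (tropMul P (toBotMat B)) Q i j := congrFun (congrFun h i) j
    _ ≤ tropMul (tropMul (toBotMat (P.map (·.unbotD δ))) (toBotMat B))
          (toBotMat (Q.map (·.unbotD δ))) i j :=
        tropMul_mono (tropMul_mono (fun _ _ => WithBot.le_coe_unbotD _ _) fun _ _ => le_rfl)
          (fun _ _ => WithBot.le_coe_unbotD _ _) i j
    _ = _ := by rw [← toBotMat_tropMul, ← toBotMat_tropMul]; rfl

theorem JleGen.map {M N : Type*} {mul : M → M → M} {mul' : N → N → N} (f : M → N)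
    (hf : ∀ x y, f (mul x y) = mul' (f x) (f y)) {A B : M} (h : JleGen mul A B) :
    JleGen mul' (f A) (f B) := by
  rcases h with rfl | ⟨P, rfl⟩ | ⟨Q, rfl⟩ | ⟨P, Q, rfl⟩
  · exact Or.inl rfl
  · exact Or.inr (Or.inl ⟨f P, hf P B⟩)
  · exact Or.inr (Or.inr (Or.inl ⟨f Q, hf B Q⟩))
  · exact Or.inr (Or.inr (Or.inr ⟨f P, f Q, by rw [hf, hf]⟩))

theorem jleGen_iff_exists_of_one {M : Type*} {mul : M → M → M} (e : M)
    (one_mul : ∀ x, mul e x = x) (mul_one : ∀ x, mul x e = x) {A B : M} :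
    JleGen mul A B ↔ ∃ P Q, A = mul (mul P B) Q := by
  refine ⟨?_, fun h => Or.inr (Or.inr (Or.inr h))⟩
  rintro (rfl | ⟨P, rfl⟩ | ⟨Q, rfl⟩ | h)
  · exact ⟨e, e, by rw [one_mul, mul_one]⟩
  · exact ⟨P, e, (mul_one _).symm⟩
  · exact ⟨e, Q, by rw [one_mul]⟩
  · exact h

/-- If `A, B` have all entries real and `A = P B Q` with `P, Q` over
`T = ℝ ∪ {-∞}`, then `A = P' B Q'` for some `P', Q'` with all entries real.
Consequently `A ≤_J B` in `M_n(FT)` iff `A ≤_J B` in `M_n(T)`. -/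
theorem stmt8 {n : ℕ} [NeZero n] (A B : Matrix (Fin n) (Fin n) ℝ) :
    (∀ P Q : Matrix (Fin n) (Fin n) (WithBot ℝ),
        toBotMat A = tropMul (tropMul P (toBotMat B)) Q →
        ∃ P' Q' : Matrix (Fin n) (Fin n) ℝ, A = tropMul (tropMul P' B) Q') ∧
      (JleGen tropMul A B ↔ JleGen tropMul (toBotMat A) (toBotMat B)) := by
  refine ⟨fun P Q h => exists_real_eq_tropMul_tropMul_of_withBot h,
    JleGen.map toBotMat toBotMat_tropMul, fun h => ?_⟩
  obtain ⟨P, Q, hPQ⟩ := (jleGen_iff_exists_of_one tropId tropId_tropMul tropMul_tropId).1 h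
  exact Or.inr (Or.inr (Or.inr (exists_real_eq_tropMul_tropMul_of_withBot hPQ)))
end

section
/- For the 4×4 tropical matrix A over FT with rows (0,1,2,3), (0,-1,-2,-3), (0,0,0,0), (0,0,0,0): the column space C(A) (tropical convex hull of the columns of A in ℝ^4) has generator dimension 4, i.e., no column of A lies in the tropical convex hull of the other three columns. -/
def inHullOfOtherCols (A : Matrix (Fin 4) (Fin 4) ℝ) (j : Fin 4) (v : Fin 4 → ℝ) :
    Prop :=
  ∃ lam : Fin 4 → ℝ, ∀ i,
    v i = (Finset.univ.erase j).sup'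
      (Finset.card_pos.mp (by simp [Finset.card_erase_of_mem])) fun k => lam k + A i k

lemma sup3 {a b c : Fin 4} (h : ({a,b,c} : Finset (Fin 4)).Nonempty) (f : Fin 4 → ℝ) :
    ({a,b,c} : Finset (Fin 4)).sup' h f = max (f a) (max (f b) (f c)) := by
  apply le_antisymm
  · apply Finset.sup'_le
    intro i hi
    simp only [Finset.mem_insert, Finset.mem_singleton] at hi
    rcases hi with rfl|rfl|rfl <;> simp [le_max_iff, le_refl]
  · simp only [max_le_iff]
    exact ⟨Finset.le_sup' f (by simp), Finset.le_sup' f (by simp),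
      Finset.le_sup' f (by simp)⟩

set_option maxHeartbeats 2000000 in
/-- For the matrix `A` of Example 6.1, no column lies in the tropical convex
hull of the other three columns; hence the column space of `A` has generator
dimension 4. -/
theorem stmt14 :
    let A : Matrix (Fin 4) (Fin 4) ℝ :=
      Matrix.of ![![0, 1, 2, 3], ![0, -1, -2, -3], ![0, 0, 0, 0], ![0, 0, 0, 0]]
    ∀ j : Fin 4, ¬ inHullOfOtherCols A j (fun i => A i j) := by
  intro A j
  rintro ⟨lam, h⟩
  have h0 := h 0
  have h1 := h 1
  have h2 := h 2
  fin_cases j <;>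
  · simp only [show (Finset.univ.erase (0:Fin 4)) = {1,2,3} from by decide,
      show (Finset.univ.erase (1:Fin 4)) = {0,2,3} from by decide,
      show (Finset.univ.erase (2:Fin 4)) = {0,1,3} from by decide,
      show (Finset.univ.erase (3:Fin 4)) = {0,1,2} from by decide,
      Fin.reduceFinMk, Fin.isValue, sup3, A,
      Matrix.of_apply, Matrix.cons_val', Matrix.cons_val_zero, Matrix.cons_val_one,
      Matrix.head_cons, Matrix.cons_val_fin_one, Matrix.empty_val',
      Matrix.head_fin_const, Matrix.cons_val_two, Matrix.tail_cons,
      Matrix.cons_val_three, max_def] at h0 h1 h2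
    split_ifs at h0 h1 h2 <;> linarith
end

section
/- Over the tropical semiring T = ℝ ∪ {-∞}, consider the linear map μ : T^4 → T^4, μ(x,y,z,t) = (x, y, z+1, t), and the matrices A with columns (-∞,-∞,0,-∞), (0,-∞,0,-∞), (1,1,0,-∞), (1,1,0,-∞) and B with columns (-∞,-∞,0,-∞), (0,-∞,0,-∞), (1,1,0,-∞), (1,0,0,-∞). Then μ maps the column space of A injectively into the column space of B, and μ maps the column space of B injectively into the column space of A. -/
/-- The tropical column space of a matrix over `T = ℝ ∪ {-∞} = WithBot ℝ`:
all tropical linear combinations `max_k (λ_k + c_k)` of the columns, with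
coefficients `λ_k ∈ T`. -/
def tropColSpace (M : Matrix (Fin 4) (Fin 4) (WithBot ℝ)) :
    Set (Fin 4 → WithBot ℝ) :=
  {v | ∃ lam : Fin 4 → WithBot ℝ,
    v = fun i => Finset.univ.sup fun k => lam k + M i k}

/-- The linear map `μ(x,y,z,t) = (x, y, z+1, t)` on `T⁴`. -/
def muMap (v : Fin 4 → WithBot ℝ) : Fin 4 → WithBot ℝ :=
  fun i => if i = 2 then v i + 1 else v i

/-!
A tropically linear map sends the column space of `M`, the tropical span of the columns of `M`,
into `C_T(N)` as soon as it sends every column of `M` there. Each column of `A` and of `B` is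
mapped by `μ` to an explicit combination of the columns of the other matrix; the only one
needing a negative coefficient is `μ(b₃) = (1 ⊗ a₁) ⊕ (-1 ⊗ a₂)` (columns indexed from `0`).
-/

open Matrix

lemma WithBot.add_finset_sup {α ι : Type*} [AddCommMonoid α] [LinearOrder α]
    [IsOrderedAddMonoid α] (s : Finset ι) (c : WithBot α) (f : ι → WithBot α) :
    c + s.sup f = s.sup fun k => c + f k :=
  Finset.apply_sup_eq_sup_comp (c + ·) (fun x y => (max_add_add_left c x y).symm)
    (WithBot.add_bot c)

lemma WithBot.bot_vadd_pi {α ι : Type*} [Add α] (v : ι → WithBot α) :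
    (⊥ : WithBot α) +ᵥ v = ⊥ := by
  ext i
  simp

namespace tropColSpace

variable {M N : Matrix (Fin 4) (Fin 4) (WithBot ℝ)} {v w : Fin 4 → WithBot ℝ}

lemma eq_sup_vadd_col (lam : Fin 4 → WithBot ℝ) :
    (fun i => Finset.univ.sup fun k => lam k + M i k) =
      Finset.univ.sup fun k => lam k +ᵥ Mᵀ k := by
  ext i
  rw [Finset.sup_apply]
  rfl

lemma bot_mem : ⊥ ∈ tropColSpace M :=
  ⟨⊥, by ext i; simp⟩

lemma col_mem (k : Fin 4) : Mᵀ k ∈ tropColSpace M := by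
  refine ⟨Function.update ⊥ k 0, funext fun i => le_antisymm ?_ ?_⟩
  · exact Finset.le_sup_of_le (Finset.mem_univ k) (by simp)
  · refine Finset.sup_le fun j _ => ?_
    rcases eq_or_ne j k with rfl | hj
    · simp
    · simp [hj]

lemma sup_mem (hv : v ∈ tropColSpace M) (hw : w ∈ tropColSpace M) :
    v ⊔ w ∈ tropColSpace M := by
  obtain ⟨lam, rfl⟩ := hv
  obtain ⟨lam', rfl⟩ := hw
  refine ⟨lam ⊔ lam', ?_⟩
  ext i
  simp only [Pi.sup_apply, ← Finset.sup_sup, ← max_add_add_right]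
  rfl

lemma vadd_mem (c : WithBot ℝ) (hv : v ∈ tropColSpace M) : c +ᵥ v ∈ tropColSpace M := by
  obtain ⟨lam, rfl⟩ := hv
  refine ⟨c +ᵥ lam, ?_⟩
  ext i
  simp only [Pi.vadd_apply, vadd_eq_add, WithBot.add_finset_sup, add_assoc]

lemma finset_sup_vadd_mem (lam : Fin 4 → WithBot ℝ) (u : Fin 4 → Fin 4 → WithBot ℝ)
    (hu : ∀ k, u k ∈ tropColSpace M) :
    (Finset.univ.sup fun k => lam k +ᵥ u k) ∈ tropColSpace M :=
  Finset.sup_induction bot_mem (fun _ h₁ _ h₂ => sup_mem h₁ h₂) fun k _ => vadd_mem _ (hu k)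

theorem mapsTo_of_col_mem (f : (Fin 4 → WithBot ℝ) → Fin 4 → WithBot ℝ)
    (hf_sup : ∀ v w, f (v ⊔ w) = f v ⊔ f w) (hf_vadd : ∀ (c : WithBot ℝ) v, f (c +ᵥ v) = c +ᵥ f v)
    (hcol : ∀ k, f (Mᵀ k) ∈ tropColSpace N) :
    Set.MapsTo f (tropColSpace M) (tropColSpace N) := by
  have hf_bot : f ⊥ = ⊥ :=
    calc f ⊥ = f (⊥ +ᵥ ⊥) := by rw [WithBot.bot_vadd_pi]
      _ = ⊥ := by rw [hf_vadd, WithBot.bot_vadd_pi]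
  rintro v ⟨lam, rfl⟩
  rw [eq_sup_vadd_col, Finset.apply_sup_eq_sup_comp f hf_sup hf_bot]
  simp only [Function.comp_def, hf_vadd]
  exact finset_sup_vadd_mem lam _ hcol

end tropColSpace

lemma muMap_sup (v w : Fin 4 → WithBot ℝ) : muMap (v ⊔ w) = muMap v ⊔ muMap w := by
  ext i
  by_cases hi : i = 2 <;> simp [muMap, hi, max_add_add_right]

lemma muMap_vadd (c : WithBot ℝ) (v : Fin 4 → WithBot ℝ) : muMap (c +ᵥ v) = c +ᵥ muMap v := by
  ext i
  by_cases hi : i = 2 <;> simp [muMap, hi, add_assoc]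

lemma muMap_injective : Function.Injective muMap := by
  intro v w h
  ext i
  have hi := congrFun h i
  by_cases h2 : i = 2
  · subst h2
    simp only [muMap, if_true] at hi
    exact WithBot.add_right_cancel WithBot.one_ne_bot hi
  · simpa [muMap, h2] using hi

def matA : Matrix (Fin 4) (Fin 4) (WithBot ℝ) :=
  (Matrix.of ![![⊥, ⊥, (0 : WithBot ℝ), ⊥], ![(0 : WithBot ℝ), ⊥, 0, ⊥],
    ![(1 : WithBot ℝ), 1, 0, ⊥], ![(1 : WithBot ℝ), 1, 0, ⊥]]).transpose

def matB : Matrix (Fin 4) (Fin 4) (WithBot ℝ) :=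
  (Matrix.of ![![⊥, ⊥, (0 : WithBot ℝ), ⊥], ![(0 : WithBot ℝ), ⊥, 0, ⊥],
    ![(1 : WithBot ℝ), 1, 0, ⊥], ![(1 : WithBot ℝ), 0, 0, ⊥]]).transpose

open tropColSpace in
lemma muMap_matA_col_mem (k : Fin 4) : muMap (matAᵀ k) ∈ tropColSpace matB := by
  have h₀ : muMap (matAᵀ 0) = (1 : WithBot ℝ) +ᵥ matBᵀ 0 := by
    ext i; fin_cases i <;> simp [muMap, matA, matB]
  have h₁ : muMap (matAᵀ 1) = ((1 : WithBot ℝ) +ᵥ matBᵀ 0) ⊔ matBᵀ 1 := by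
    ext i; fin_cases i <;> simp [muMap, matA, matB]
  have h₂ : muMap (matAᵀ 2) = ((1 : WithBot ℝ) +ᵥ matBᵀ 0) ⊔ matBᵀ 2 := by
    ext i; fin_cases i <;> simp [muMap, matA, matB]
  fin_cases k
  · exact h₀ ▸ vadd_mem 1 (col_mem 0)
  · exact h₁ ▸ sup_mem (vadd_mem 1 (col_mem 0)) (col_mem 1)
  · exact h₂ ▸ sup_mem (vadd_mem 1 (col_mem 0)) (col_mem 2)
  · exact h₂ ▸ sup_mem (vadd_mem 1 (col_mem 0)) (col_mem 2)

open tropColSpace in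
lemma muMap_matB_col_mem (k : Fin 4) : muMap (matBᵀ k) ∈ tropColSpace matA := by
  have h₀ : muMap (matBᵀ 0) = (1 : WithBot ℝ) +ᵥ matAᵀ 0 := by
    ext i; fin_cases i <;> simp [muMap, matA, matB]
  have h₁ : muMap (matBᵀ 1) = ((1 : WithBot ℝ) +ᵥ matAᵀ 0) ⊔ matAᵀ 1 := by
    ext i; fin_cases i <;> simp [muMap, matA, matB]
  have h₂ : muMap (matBᵀ 2) = ((1 : WithBot ℝ) +ᵥ matAᵀ 0) ⊔ matAᵀ 2 := by
    ext i; fin_cases i <;> simp [muMap, matA, matB]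
  have h₃ : muMap (matBᵀ 3) =
      ((1 : WithBot ℝ) +ᵥ matAᵀ 1) ⊔ (((-1 : ℝ) : WithBot ℝ) +ᵥ matAᵀ 2) := by
    ext i; fin_cases i <;> simp [muMap, matA, matB, ← WithBot.coe_one, ← WithBot.coe_add]
  fin_cases k
  · exact h₀ ▸ vadd_mem 1 (col_mem 0)
  · exact h₁ ▸ sup_mem (vadd_mem 1 (col_mem 0)) (col_mem 1)
  · exact h₂ ▸ sup_mem (vadd_mem 1 (col_mem 0)) (col_mem 2)
  · exact h₃ ▸ sup_mem (vadd_mem 1 (col_mem 1)) (vadd_mem _ (col_mem 2))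

/-- Example 6.2: with `A` having columns `(-∞,-∞,0,-∞), (0,-∞,0,-∞),
(1,1,0,-∞), (1,1,0,-∞)` and `B` having columns `(-∞,-∞,0,-∞), (0,-∞,0,-∞),
(1,1,0,-∞), (1,0,0,-∞)`, the map `μ` maps `C_T(A)` injectively into `C_T(B)`,
and also maps `C_T(B)` injectively into `C_T(A)`. -/
theorem stmt18 :
    let A : Matrix (Fin 4) (Fin 4) (WithBot ℝ) :=
      (Matrix.of ![![⊥, ⊥, (0 : WithBot ℝ), ⊥], ![(0 : WithBot ℝ), ⊥, 0, ⊥],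
        ![(1 : WithBot ℝ), 1, 0, ⊥], ![(1 : WithBot ℝ), 1, 0, ⊥]]).transpose
    let B : Matrix (Fin 4) (Fin 4) (WithBot ℝ) :=
      (Matrix.of ![![⊥, ⊥, (0 : WithBot ℝ), ⊥], ![(0 : WithBot ℝ), ⊥, 0, ⊥],
        ![(1 : WithBot ℝ), 1, 0, ⊥], ![(1 : WithBot ℝ), 0, 0, ⊥]]).transpose
    (∀ v ∈ tropColSpace A, muMap v ∈ tropColSpace B) ∧
      Set.InjOn muMap (tropColSpace A) ∧
      (∀ v ∈ tropColSpace B, muMap v ∈ tropColSpace A) ∧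
      Set.InjOn muMap (tropColSpace B) :=
  ⟨tropColSpace.mapsTo_of_col_mem muMap muMap_sup muMap_vadd muMap_matA_col_mem,
    muMap_injective.injOn,
    tropColSpace.mapsTo_of_col_mem muMap muMap_sup muMap_vadd muMap_matB_col_mem,
    muMap_injective.injOn⟩
end
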